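/- (Preservation) If ⊢ c : C is derivable for a closed core Eff computation c and c ⇝ c', then ⊢ c' : C is derivable. -/

import Mathlib

namespace CoreEff

/-- Names for effects, instances and operation symbols. -/
structure Sig where
  Effect : Type
  Inst : Type
  Op : Type

/- Pure types and dirty types of core Eff.  A region is a finite set of
instances, a dirt a finite set of operations `ι#op`. -/
mutual
inductive PType (σ : Sig) : Type
  | bool : PType σ
  | nat : PType σ
  | unit : PType σ
  | empty : PType σ
  | fn : PType σ → DType σ → PType σ
  | eff : σ.Effect → Finset σ.Inst → PType σ
  | hand : DType σ → DType σ → PType σ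
inductive DType (σ : Sig) : Type
  | bang : PType σ → Finset (σ.Inst × σ.Op) → DType σ
end

/-- Assignment of effects to instances and operation symbols, and of
parameter/result types to operation symbols (the signatures `Σ_E`). -/
structure OpSig (σ : Sig) where
  instOf : σ.Inst → σ.Effect
  opOf : σ.Op → σ.Effect
  par : σ.Op → PType σ
  res : σ.Op → PType σ

/- Syntax of core Eff, with de Bruijn indices.
In an operation case `e#op x k ↦ c`, the body `c` binds `x` as index 1 and
`k` as index 0.  In `letrec f x = c₁ in c₂`, `c₁` binds `f` as 1 and `x` as 0,
and `c₂` binds `f` as 0. -/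
mutual
inductive Expr (σ : Sig) : Type
  | var : Nat → Expr σ
  | tt : Expr σ
  | ff : Expr σ
  | zero : Expr σ
  | succ : Expr σ → Expr σ
  | unit : Expr σ
  | fn : PType σ → Comp σ → Expr σ
  | inst : σ.Inst → Expr σ
  | handler : PType σ → Comp σ → OpCases σ → Expr σ
inductive OpCases (σ : Sig) : Type
  | nil : DType σ → OpCases σ
  | cons : Expr σ → σ.Op → Comp σ → OpCases σ → OpCases σ
inductive Comp (σ : Sig) : Type
  | ret : Expr σ → Comp σ
  | call : Expr σ → σ.Op → Expr σ → Comp σ → Comp σ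
  | handle : Expr σ → Comp σ → Comp σ
  | ite : Expr σ → Comp σ → Comp σ → Comp σ
  | case : Expr σ → Comp σ → Comp σ → Comp σ
  | absurd : DType σ → Expr σ → Comp σ
  | app : Expr σ → Expr σ → Comp σ
  | letin : Comp σ → Comp σ → Comp σ
  | letrec : PType σ → DType σ → Comp σ → Comp σ → Comp σ
end

/-- Pushing a renaming under one binder. -/
def liftRen (ξ : Nat → Nat) : Nat → Nat
  | 0 => 0
  | n + 1 => ξ n + 1

variable {σ : Sig}

mutual
def renameE (ξ : Nat → Nat) : Expr σ → Expr σ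
  | .var n => .var (ξ n)
  | .tt => .tt
  | .ff => .ff
  | .zero => .zero
  | .succ e => .succ (renameE ξ e)
  | .unit => .unit
  | .fn A c => .fn A (renameC (liftRen ξ) c)
  | .inst ι => .inst ι
  | .handler A cv ocs => .handler A (renameC (liftRen ξ) cv) (renameO ξ ocs)
def renameO (ξ : Nat → Nat) : OpCases σ → OpCases σ
  | .nil C => .nil C
  | .cons e op c ocs =>
      .cons (renameE ξ e) op (renameC (liftRen (liftRen ξ)) c) (renameO ξ ocs)
def renameC (ξ : Nat → Nat) : Comp σ → Comp σ
  | .ret e => .ret (renameE ξ e)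
  | .call e1 op e2 c => .call (renameE ξ e1) op (renameE ξ e2) (renameC (liftRen ξ) c)
  | .handle e c => .handle (renameE ξ e) (renameC ξ c)
  | .ite e c1 c2 => .ite (renameE ξ e) (renameC ξ c1) (renameC ξ c2)
  | .case e c1 c2 => .case (renameE ξ e) (renameC ξ c1) (renameC (liftRen ξ) c2)
  | .absurd C e => .absurd C (renameE ξ e)
  | .app e1 e2 => .app (renameE ξ e1) (renameE ξ e2)
  | .letin c1 c2 => .letin (renameC ξ c1) (renameC (liftRen ξ) c2)
  | .letrec A C c1 c2 =>
      .letrec A C (renameC (liftRen (liftRen ξ)) c1) (renameC (liftRen ξ) c2)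
end

/-- Weakening of an expression by one variable. -/
def shiftE (e : Expr σ) : Expr σ := renameE Nat.succ e

/-- Pushing a substitution under one binder. -/
def liftSub (s : Nat → Expr σ) : Nat → Expr σ
  | 0 => .var 0
  | n + 1 => shiftE (s n)

mutual
def substE (s : Nat → Expr σ) : Expr σ → Expr σ
  | .var n => s n
  | .tt => .tt
  | .ff => .ff
  | .zero => .zero
  | .succ e => .succ (substE s e)
  | .unit => .unit
  | .fn A c => .fn A (substC (liftSub s) c)
  | .inst ι => .inst ι
  | .handler A cv ocs => .handler A (substC (liftSub s) cv) (substO s ocs)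
def substO (s : Nat → Expr σ) : OpCases σ → OpCases σ
  | .nil C => .nil C
  | .cons e op c ocs =>
      .cons (substE s e) op (substC (liftSub (liftSub s)) c) (substO s ocs)
def substC (s : Nat → Expr σ) : Comp σ → Comp σ
  | .ret e => .ret (substE s e)
  | .call e1 op e2 c => .call (substE s e1) op (substE s e2) (substC (liftSub s) c)
  | .handle e c => .handle (substE s e) (substC s c)
  | .ite e c1 c2 => .ite (substE s e) (substC s c1) (substC s c2)
  | .case e c1 c2 => .case (substE s e) (substC s c1) (substC (liftSub s) c2)
  | .absurd C e => .absurd C (substE s e)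
  | .app e1 e2 => .app (substE s e1) (substE s e2)
  | .letin c1 c2 => .letin (substC s c1) (substC (liftSub s) c2)
  | .letrec A C c1 c2 =>
      .letrec A C (substC (liftSub (liftSub s)) c1) (substC (liftSub s) c2)
end

/-- Substituting an expression for the last-bound variable. -/
def sub1 (e : Expr σ) : Nat → Expr σ
  | 0 => e
  | n + 1 => .var n

/-- Substituting for the two last-bound variables (index 1 gets `e1`, index 0 gets `e0`). -/
def sub2 (e1 e0 : Expr σ) : Nat → Expr σ
  | 0 => e0
  | 1 => e1
  | n + 2 => .var n

def subst0E (e : Expr σ) (e' : Expr σ) : Expr σ := substE (sub1 e) e'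
def subst0C (e : Expr σ) (c : Comp σ) : Comp σ := substC (sub1 e) c
def subst2C (e1 e0 : Expr σ) (c : Comp σ) : Comp σ := substC (sub2 e1 e0) c

/-- Swap of the two last-bound variables. -/
def swap01 : Nat → Nat
  | 0 => 1
  | 1 => 0
  | n + 2 => n + 2

/-- The unfolding `fun x ↦ let rec f x = c₁ in c₁` of a recursive definition. -/
def recUnfold (A : PType σ) (C : DType σ) (c1 : Comp σ) : Expr σ :=
  .fn A (.letrec A C (renameC (liftRen (liftRen Nat.succ)) c1) (renameC swap01 c1))

/-- `Dispatch ocs ι op e κ c` means `c = ocs_{ι#op}(e, κ)`: the first operation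
case of `ocs` matching `ι#op` is selected (substituting `e` for the parameter
and `κ` for the continuation) and the call is re-raised, with continuation
`(y. κ y)`, if no case matches. -/
inductive Dispatch : OpCases σ → σ.Inst → σ.Op → Expr σ → Expr σ → Comp σ → Prop
  | nil {C ι op e κ} :
      Dispatch (.nil C) ι op e κ (.call (.inst ι) op e (.app (shiftE κ) (.var 0)))
  | found {ι op c ocs e κ} :
      Dispatch (.cons (.inst ι) op c ocs) ι op e κ (subst2C e κ c)
  | skip {e' op' c ocs ι op e κ c'} :
      (Expr.inst ι ≠ e' ∨ op ≠ op') →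
      Dispatch ocs ι op e κ c' →
      Dispatch (.cons e' op' c ocs) ι op e κ c'

/-- Small-step operational semantics `c ⇝ c'` of core Eff. -/
inductive Step (Ω : OpSig σ) : Comp σ → Comp σ → Prop
  | iteTrue {c1 c2} : Step Ω (.ite .tt c1 c2) c1
  | iteFalse {c1 c2} : Step Ω (.ite .ff c1 c2) c2
  | caseZero {c1 c2} : Step Ω (.case .zero c1 c2) c1
  | caseSucc {e c1 c2} : Step Ω (.case (.succ e) c1 c2) (subst0C e c2)
  | app {A c e} : Step Ω (.app (.fn A c) e) (subst0C e c)
  | letCong {c1 c1' c2} : Step Ω c1 c1' → Step Ω (.letin c1 c2) (.letin c1' c2)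
  | letVal {e c2} : Step Ω (.letin (.ret e) c2) (subst0C e c2)
  | letOp {ι op e c1 c2} :
      Step Ω (.letin (.call (.inst ι) op e c1) c2)
        (.call (.inst ι) op e (.letin c1 (renameC (liftRen Nat.succ) c2)))
  | letrec {A C c1 c2} : Step Ω (.letrec A C c1 c2) (subst0C (recUnfold A C c1) c2)
  | handleCong {h c c'} : Step Ω c c' → Step Ω (.handle h c) (.handle h c')
  | handleVal {A cv ocs e} :
      Step Ω (.handle (.handler A cv ocs) (.ret e)) (subst0C e cv)
  | handleOp {A cv ocs ι op e c c'} :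
      Dispatch ocs ι op e
        (.fn (Ω.res op) (.handle (shiftE (.handler A cv ocs)) c)) c' →
      Step Ω (.handle (.handler A cv ocs) (.call (.inst ι) op e c)) c'

/-- Big-step operational semantics `c ⇓ r` of core Eff; results are `val e`
and operation calls `ι#op e (y.c)`. -/
inductive Big (Ω : OpSig σ) : Comp σ → Comp σ → Prop
  | ret {e} : Big Ω (.ret e) (.ret e)
  | call {ι op e c} : Big Ω (.call (.inst ι) op e c) (.call (.inst ι) op e c)
  | iteTrue {c1 c2 r} : Big Ω c1 r → Big Ω (.ite .tt c1 c2) r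
  | iteFalse {c1 c2 r} : Big Ω c2 r → Big Ω (.ite .ff c1 c2) r
  | caseZero {c1 c2 r} : Big Ω c1 r → Big Ω (.case .zero c1 c2) r
  | caseSucc {e c1 c2 r} : Big Ω (subst0C e c2) r → Big Ω (.case (.succ e) c1 c2) r
  | app {A c e r} : Big Ω (subst0C e c) r → Big Ω (.app (.fn A c) e) r
  | letVal {c1 c2 e r} : Big Ω c1 (.ret e) → Big Ω (subst0C e c2) r →
      Big Ω (.letin c1 c2) r
  | letOp {c1 c2 ι op e c} : Big Ω c1 (.call (.inst ι) op e c) →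
      Big Ω (.letin c1 c2)
        (.call (.inst ι) op e (.letin c (renameC (liftRen Nat.succ) c2)))
  | letrec {A C c1 c2 r} : Big Ω (subst0C (recUnfold A C c1) c2) r →
      Big Ω (.letrec A C c1 c2) r
  | handleVal {A cv ocs c e r} : Big Ω c (.ret e) → Big Ω (subst0C e cv) r →
      Big Ω (.handle (.handler A cv ocs) c) r
  | handleOp {A cv ocs c ι op e c' c'' r} :
      Big Ω c (.call (.inst ι) op e c') →
      Dispatch ocs ι op e
        (.fn (Ω.res op) (.handle (shiftE (.handler A cv ocs)) c')) c'' →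
      Big Ω c'' r →
      Big Ω (.handle (.handler A cv ocs) c) r

/-- `c ⇝* r`: iterated small steps ending in a result. -/
inductive StarStep (Ω : OpSig σ) : Comp σ → Comp σ → Prop
  | ret {e} : StarStep Ω (.ret e) (.ret e)
  | call {ι op e c} : StarStep Ω (.call (.inst ι) op e c) (.call (.inst ι) op e c)
  | step {c c' r} : Step Ω c c' → StarStep Ω c' r → StarStep Ω c r

/- Structural subtyping of pure and dirty types. -/
mutual
inductive SubP (σ : Sig) : PType σ → PType σ → Prop
  | bool : SubP σ .bool .bool
  | nat : SubP σ .nat .nat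
  | unit : SubP σ .unit .unit
  | empty : SubP σ .empty .empty
  | fn {A A' C C'} : SubP σ A' A → SubD σ C C' → SubP σ (.fn A C) (.fn A' C')
  | eff {E R R'} : R ⊆ R' → SubP σ (.eff E R) (.eff E R')
  | hand {C C' D D'} : SubD σ C' C → SubD σ D D' → SubP σ (.hand C D) (.hand C' D')
inductive SubD (σ : Sig) : DType σ → DType σ → Prop
  | bang {A A' Δ Δ'} : SubP σ A A' → Δ ⊆ Δ' → SubD σ (.bang A Δ) (.bang A' Δ')
end

/- The effect system of core Eff: typing of expressions, operation cases
(`Γ ⊢ ocs : C / Δ`) and computations, with subsumption. -/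
mutual
inductive HasTypeE (σ : Sig) (Ω : OpSig σ) [DecidableEq σ.Inst] [DecidableEq σ.Op] :
    List (PType σ) → Expr σ → PType σ → Prop
  | var {Γ n A} : Γ[n]? = some A → HasTypeE σ Ω Γ (.var n) A
  | tt {Γ} : HasTypeE σ Ω Γ .tt .bool
  | ff {Γ} : HasTypeE σ Ω Γ .ff .bool
  | zero {Γ} : HasTypeE σ Ω Γ .zero .nat
  | succ {Γ e} : HasTypeE σ Ω Γ e .nat → HasTypeE σ Ω Γ (.succ e) .nat
  | unit {Γ} : HasTypeE σ Ω Γ .unit .unit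
  | fn {Γ A c C} : HasTypeC σ Ω (A :: Γ) c C → HasTypeE σ Ω Γ (.fn A c) (.fn A C)
  | inst {Γ ι E R} : ι ∈ R → (∀ κ ∈ R, Ω.instOf κ = E) →
      HasTypeE σ Ω Γ (.inst ι) (.eff E R)
  | handler {Γ A cv ocs B Δ Δ' Δ''} :
      HasTypeC σ Ω (A :: Γ) cv (.bang B Δ') →
      HasTypeO σ Ω Γ ocs (.bang B Δ') Δ'' →
      Δ ⊆ Δ'' ∪ Δ' →
      HasTypeE σ Ω Γ (.handler A cv ocs) (.hand (.bang A Δ) (.bang B Δ'))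
  | sub {Γ e A A'} : HasTypeE σ Ω Γ e A → SubP σ A A' → HasTypeE σ Ω Γ e A'
inductive HasTypeO (σ : Sig) (Ω : OpSig σ) [DecidableEq σ.Inst] [DecidableEq σ.Op] :
    List (PType σ) → OpCases σ → DType σ → Finset (σ.Inst × σ.Op) → Prop
  | nil {Γ C} : HasTypeO σ Ω Γ (.nil C) C ∅
  | cons {Γ e op c ocs E R C Δ Δ'} :
      HasTypeE σ Ω Γ e (.eff E R) →
      Ω.opOf op = E →
      HasTypeC σ Ω (.fn (Ω.res op) C :: Ω.par op :: Γ) c C →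
      HasTypeO σ Ω Γ ocs C Δ' →
      (∀ ι, R = {ι} → Δ ⊆ insert (ι, op) Δ') →
      ((¬ ∃ ι, R = {ι}) → Δ ⊆ Δ') →
      HasTypeO σ Ω Γ (.cons e op c ocs) C Δ
inductive HasTypeC (σ : Sig) (Ω : OpSig σ) [DecidableEq σ.Inst] [DecidableEq σ.Op] :
    List (PType σ) → Comp σ → DType σ → Prop
  | ret {Γ e A Δ} : HasTypeE σ Ω Γ e A → HasTypeC σ Ω Γ (.ret e) (.bang A Δ)
  | call {Γ e1 op e2 c E R A Δ} :
      HasTypeE σ Ω Γ e1 (.eff E R) →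
      Ω.opOf op = E →
      HasTypeE σ Ω Γ e2 (Ω.par op) →
      HasTypeC σ Ω (Ω.res op :: Γ) c (.bang A Δ) →
      (∀ ι ∈ R, (ι, op) ∈ Δ) →
      HasTypeC σ Ω Γ (.call e1 op e2 c) (.bang A Δ)
  | handle {Γ e c C D} : HasTypeE σ Ω Γ e (.hand C D) → HasTypeC σ Ω Γ c C →
      HasTypeC σ Ω Γ (.handle e c) D
  | ite {Γ e c1 c2 C} : HasTypeE σ Ω Γ e .bool → HasTypeC σ Ω Γ c1 C →
      HasTypeC σ Ω Γ c2 C → HasTypeC σ Ω Γ (.ite e c1 c2) C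
  | case {Γ e c1 c2 C} : HasTypeE σ Ω Γ e .nat → HasTypeC σ Ω Γ c1 C →
      HasTypeC σ Ω (.nat :: Γ) c2 C → HasTypeC σ Ω Γ (.case e c1 c2) C
  | absurd {Γ e C} : HasTypeE σ Ω Γ e .empty → HasTypeC σ Ω Γ (.absurd C e) C
  | app {Γ e1 e2 A C} : HasTypeE σ Ω Γ e1 (.fn A C) → HasTypeE σ Ω Γ e2 A →
      HasTypeC σ Ω Γ (.app e1 e2) C
  | letin {Γ c1 c2 A B Δ} : HasTypeC σ Ω Γ c1 (.bang A Δ) →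
      HasTypeC σ Ω (A :: Γ) c2 (.bang B Δ) →
      HasTypeC σ Ω Γ (.letin c1 c2) (.bang B Δ)
  | letrec {Γ A C c1 c2 D} :
      HasTypeC σ Ω (A :: .fn A C :: Γ) c1 C →
      HasTypeC σ Ω (.fn A C :: Γ) c2 D →
      HasTypeC σ Ω Γ (.letrec A C c1 c2) D
  | sub {Γ c C C'} : HasTypeC σ Ω Γ c C → SubD σ C C' → HasTypeC σ Ω Γ c C'
end

/-- Skeletal types: pure/dirty types with all effect information erased. -/
inductive SType (σ : Sig) : Type
  | bool : SType σ
  | nat : SType σ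
  | unit : SType σ
  | empty : SType σ
  | fn : SType σ → SType σ → SType σ
  | eff : σ.Effect → SType σ
  | hand : SType σ → SType σ → SType σ

/- Skeletal erasure of pure and dirty types. -/
mutual
def skelP : PType σ → SType σ
  | .bool => .bool
  | .nat => .nat
  | .unit => .unit
  | .empty => .empty
  | .fn A C => .fn (skelP A) (skelD C)
  | .eff E _ => .eff E
  | .hand C D => .hand (skelD C) (skelD D)
def skelD : DType σ → SType σ
  | .bang A _ => skelP A
end

/- The skeletal type system: the rules of core Eff with all effect
information erased and without subsumption. -/
mutual
inductive SHasTypeE (σ : Sig) (Ω : OpSig σ) :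
    List (SType σ) → Expr σ → SType σ → Prop
  | var {Γ n S} : Γ[n]? = some S → SHasTypeE σ Ω Γ (.var n) S
  | tt {Γ} : SHasTypeE σ Ω Γ .tt .bool
  | ff {Γ} : SHasTypeE σ Ω Γ .ff .bool
  | zero {Γ} : SHasTypeE σ Ω Γ .zero .nat
  | succ {Γ e} : SHasTypeE σ Ω Γ e .nat → SHasTypeE σ Ω Γ (.succ e) .nat
  | unit {Γ} : SHasTypeE σ Ω Γ .unit .unit
  | fn {Γ A c T} : SHasTypeC σ Ω (skelP A :: Γ) c T →
      SHasTypeE σ Ω Γ (.fn A c) (.fn (skelP A) T)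
  | inst {Γ ι} : SHasTypeE σ Ω Γ (.inst ι) (.eff (Ω.instOf ι))
  | handler {Γ A cv ocs T} :
      SHasTypeC σ Ω (skelP A :: Γ) cv T →
      SHasTypeO σ Ω Γ ocs T →
      SHasTypeE σ Ω Γ (.handler A cv ocs) (.hand (skelP A) T)
inductive SHasTypeO (σ : Sig) (Ω : OpSig σ) :
    List (SType σ) → OpCases σ → SType σ → Prop
  | nil {Γ C} : SHasTypeO σ Ω Γ (.nil C) (skelD C)
  | cons {Γ e op c ocs T} :
      SHasTypeE σ Ω Γ e (.eff (Ω.opOf op)) →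
      SHasTypeC σ Ω (.fn (skelP (Ω.res op)) T :: skelP (Ω.par op) :: Γ) c T →
      SHasTypeO σ Ω Γ ocs T →
      SHasTypeO σ Ω Γ (.cons e op c ocs) T
inductive SHasTypeC (σ : Sig) (Ω : OpSig σ) :
    List (SType σ) → Comp σ → SType σ → Prop
  | ret {Γ e S} : SHasTypeE σ Ω Γ e S → SHasTypeC σ Ω Γ (.ret e) S
  | call {Γ e1 op e2 c T} :
      SHasTypeE σ Ω Γ e1 (.eff (Ω.opOf op)) →
      SHasTypeE σ Ω Γ e2 (skelP (Ω.par op)) →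
      SHasTypeC σ Ω (skelP (Ω.res op) :: Γ) c T →
      SHasTypeC σ Ω Γ (.call e1 op e2 c) T
  | handle {Γ e c S T} : SHasTypeE σ Ω Γ e (.hand S T) → SHasTypeC σ Ω Γ c S →
      SHasTypeC σ Ω Γ (.handle e c) T
  | ite {Γ e c1 c2 T} : SHasTypeE σ Ω Γ e .bool → SHasTypeC σ Ω Γ c1 T →
      SHasTypeC σ Ω Γ c2 T → SHasTypeC σ Ω Γ (.ite e c1 c2) T
  | case {Γ e c1 c2 T} : SHasTypeE σ Ω Γ e .nat → SHasTypeC σ Ω Γ c1 T →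
      SHasTypeC σ Ω (.nat :: Γ) c2 T → SHasTypeC σ Ω Γ (.case e c1 c2) T
  | absurd {Γ e C} : SHasTypeE σ Ω Γ e .empty → SHasTypeC σ Ω Γ (.absurd C e) (skelD C)
  | app {Γ e1 e2 S T} : SHasTypeE σ Ω Γ e1 (.fn S T) → SHasTypeE σ Ω Γ e2 S →
      SHasTypeC σ Ω Γ (.app e1 e2) T
  | letin {Γ c1 c2 S T} : SHasTypeC σ Ω Γ c1 S → SHasTypeC σ Ω (S :: Γ) c2 T →
      SHasTypeC σ Ω Γ (.letin c1 c2) T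
  | letrec {Γ A C c1 c2 T} :
      SHasTypeC σ Ω (skelP A :: .fn (skelP A) (skelD C) :: Γ) c1 (skelD C) →
      SHasTypeC σ Ω (.fn (skelP A) (skelD C) :: Γ) c2 T →
      SHasTypeC σ Ω Γ (.letrec A C c1 c2) T
end

end CoreEff

/-!
Preservation goes by induction on the step. Typing is stable under renaming and under
well-typed substitution, and a generation lemma exposes the syntax-directed rule at the root of
any derivation, so that subsumption only has to be pushed into that rule's premises. The only
non-routine redex is handler dispatch: a closed expression of effect type is an instance, so the
typing of the operation cases shows that `ι#op` is either caught by a case, whose body is typed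
with the continuation, or re-raised, and then the side condition `Δ ⊆ Δ'' ∪ Δ'` of the handler
rule puts `ι#op` into the output dirt.
-/

namespace CoreEff

variable {σ : Sig}

mutual
theorem SubP.refl : (A : PType σ) → SubP σ A A
  | .bool => .bool
  | .nat => .nat
  | .unit => .unit
  | .empty => .empty
  | .fn A C => .fn (SubP.refl A) (SubD.refl C)
  | .eff _ _ => .eff subset_rfl
  | .hand C D => .hand (SubD.refl C) (SubD.refl D)
theorem SubD.refl : (C : DType σ) → SubD σ C C
  | .bang A _ => .bang (SubP.refl A) subset_rfl
end

mutual
theorem SubP.trans {A₁ A₂ A₃ : PType σ} : SubP σ A₁ A₂ → SubP σ A₂ A₃ → SubP σ A₁ A₃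
  | .bool, .bool => .bool
  | .nat, .nat => .nat
  | .unit, .unit => .unit
  | .empty, .empty => .empty
  | .fn hA hC, .fn hA' hC' => .fn (hA'.trans hA) (hC.trans hC')
  | .eff hR, .eff hR' => .eff (hR.trans hR')
  | .hand hC hD, .hand hC' hD' => .hand (hC'.trans hC) (hD.trans hD')
theorem SubD.trans {C₁ C₂ C₃ : DType σ} : SubD σ C₁ C₂ → SubD σ C₂ C₃ → SubD σ C₁ C₃
  | .bang hA hΔ, .bang hA' hΔ' => .bang (hA.trans hA') (hΔ.trans hΔ')
end

def WellTypedRen (ξ : Nat → Nat) (Γ Γ' : List (PType σ)) : Prop :=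
  ∀ n A, Γ[n]? = some A → Γ'[ξ n]? = some A

theorem WellTypedRen.lift {ξ : Nat → Nat} {Γ Γ' : List (PType σ)} (h : WellTypedRen ξ Γ Γ')
    (A : PType σ) : WellTypedRen (liftRen ξ) (A :: Γ) (A :: Γ')
  | 0, _, hn => hn
  | n + 1, B, hn => h n B hn

theorem wellTypedRen_succ (Γ : List (PType σ)) (A : PType σ) : WellTypedRen Nat.succ Γ (A :: Γ) :=
  fun _ _ hn => hn

variable {Ω : OpSig σ} [DecidableEq σ.Inst] [DecidableEq σ.Op]

mutual
theorem HasTypeE.rename {Γ Γ' : List (PType σ)} {ξ : Nat → Nat} {e : Expr σ} {A : PType σ}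
    (hξ : WellTypedRen ξ Γ Γ') : HasTypeE σ Ω Γ e A → HasTypeE σ Ω Γ' (renameE ξ e) A
  | .var h => .var (hξ _ _ h)
  | .tt => .tt
  | .ff => .ff
  | .zero => .zero
  | .succ h => .succ (h.rename hξ)
  | .unit => .unit
  | .fn h => .fn (h.rename (hξ.lift _))
  | .inst h₁ h₂ => .inst h₁ h₂
  | .handler hv ho hΔ => .handler (hv.rename (hξ.lift _)) (ho.rename hξ) hΔ
  | .sub h hA => .sub (h.rename hξ) hA
theorem HasTypeO.rename {Γ Γ' : List (PType σ)} {ξ : Nat → Nat} {ocs : OpCases σ} {C : DType σ}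
    {Δ : Finset (σ.Inst × σ.Op)}
    (hξ : WellTypedRen ξ Γ Γ') : HasTypeO σ Ω Γ ocs C Δ → HasTypeO σ Ω Γ' (renameO ξ ocs) C Δ
  | .nil => .nil
  | .cons he hop hc ho h₁ h₂ =>
      .cons (he.rename hξ) hop (hc.rename ((hξ.lift _).lift _)) (ho.rename hξ) h₁ h₂
theorem HasTypeC.rename {Γ Γ' : List (PType σ)} {ξ : Nat → Nat} {c : Comp σ} {C : DType σ}
    (hξ : WellTypedRen ξ Γ Γ') : HasTypeC σ Ω Γ c C → HasTypeC σ Ω Γ' (renameC ξ c) C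
  | .ret h => .ret (h.rename hξ)
  | .call h₁ hop h₂ hc hR => .call (h₁.rename hξ) hop (h₂.rename hξ) (hc.rename (hξ.lift _)) hR
  | .handle he hc => .handle (he.rename hξ) (hc.rename hξ)
  | .ite he h₁ h₂ => .ite (he.rename hξ) (h₁.rename hξ) (h₂.rename hξ)
  | .case he h₁ h₂ => .case (he.rename hξ) (h₁.rename hξ) (h₂.rename (hξ.lift _))
  | .absurd he => .absurd (he.rename hξ)
  | .app h₁ h₂ => .app (h₁.rename hξ) (h₂.rename hξ)
  | .letin h₁ h₂ => .letin (h₁.rename hξ) (h₂.rename (hξ.lift _))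
  | .letrec h₁ h₂ => .letrec (h₁.rename ((hξ.lift _).lift _)) (h₂.rename (hξ.lift _))
  | .sub h hC => .sub (h.rename hξ) hC
end

def WellTypedSubst (Ω : OpSig σ) (s : Nat → Expr σ) (Γ Γ' : List (PType σ)) : Prop :=
  ∀ n A, Γ[n]? = some A → HasTypeE σ Ω Γ' (s n) A

theorem WellTypedSubst.lift {s : Nat → Expr σ} {Γ Γ' : List (PType σ)}
    (h : WellTypedSubst Ω s Γ Γ') (A : PType σ) :
    WellTypedSubst Ω (liftSub s) (A :: Γ) (A :: Γ')
  | 0, _, hn => .var hn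
  | n + 1, B, hn => (h n B hn).rename (wellTypedRen_succ Γ' A)

theorem wellTypedSubst_sub1 {Γ : List (PType σ)} {e : Expr σ} {A : PType σ}
    (he : HasTypeE σ Ω Γ e A) : WellTypedSubst Ω (sub1 e) (A :: Γ) Γ
  | 0, _, hn => Option.some.inj hn ▸ he
  | _ + 1, _, hn => .var hn

theorem wellTypedSubst_sub2 {Γ : List (PType σ)} {e₁ e₀ : Expr σ} {A B : PType σ}
    (h₁ : HasTypeE σ Ω Γ e₁ A) (h₀ : HasTypeE σ Ω Γ e₀ B) :
    WellTypedSubst Ω (sub2 e₁ e₀) (B :: A :: Γ) Γ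
  | 0, _, hn => Option.some.inj hn ▸ h₀
  | 1, _, hn => Option.some.inj hn ▸ h₁
  | _ + 2, _, hn => .var hn

mutual
theorem HasTypeE.subst {Γ Γ' : List (PType σ)} {s : Nat → Expr σ} {e : Expr σ} {A : PType σ}
    (hs : WellTypedSubst Ω s Γ Γ') : HasTypeE σ Ω Γ e A → HasTypeE σ Ω Γ' (substE s e) A
  | .var h => hs _ _ h
  | .tt => .tt
  | .ff => .ff
  | .zero => .zero
  | .succ h => .succ (h.subst hs)
  | .unit => .unit
  | .fn h => .fn (h.subst (hs.lift _))
  | .inst h₁ h₂ => .inst h₁ h₂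
  | .handler hv ho hΔ => .handler (hv.subst (hs.lift _)) (ho.subst hs) hΔ
  | .sub h hA => .sub (h.subst hs) hA
theorem HasTypeO.subst {Γ Γ' : List (PType σ)} {s : Nat → Expr σ} {ocs : OpCases σ}
    {C : DType σ} {Δ : Finset (σ.Inst × σ.Op)}
    (hs : WellTypedSubst Ω s Γ Γ') : HasTypeO σ Ω Γ ocs C Δ → HasTypeO σ Ω Γ' (substO s ocs) C Δ
  | .nil => .nil
  | .cons he hop hc ho h₁ h₂ =>
      .cons (he.subst hs) hop (hc.subst ((hs.lift _).lift _)) (ho.subst hs) h₁ h₂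
theorem HasTypeC.subst {Γ Γ' : List (PType σ)} {s : Nat → Expr σ} {c : Comp σ} {C : DType σ}
    (hs : WellTypedSubst Ω s Γ Γ') : HasTypeC σ Ω Γ c C → HasTypeC σ Ω Γ' (substC s c) C
  | .ret h => .ret (h.subst hs)
  | .call h₁ hop h₂ hc hR => .call (h₁.subst hs) hop (h₂.subst hs) (hc.subst (hs.lift _)) hR
  | .handle he hc => .handle (he.subst hs) (hc.subst hs)
  | .ite he h₁ h₂ => .ite (he.subst hs) (h₁.subst hs) (h₂.subst hs)
  | .case he h₁ h₂ => .case (he.subst hs) (h₁.subst hs) (h₂.subst (hs.lift _))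
  | .absurd he => .absurd (he.subst hs)
  | .app h₁ h₂ => .app (h₁.subst hs) (h₂.subst hs)
  | .letin h₁ h₂ => .letin (h₁.subst hs) (h₂.subst (hs.lift _))
  | .letrec h₁ h₂ => .letrec (h₁.subst ((hs.lift _).lift _)) (h₂.subst (hs.lift _))
  | .sub h hC => .sub (h.subst hs) hC
end

theorem HasTypeC.subst0 {Γ : List (PType σ)} {c : Comp σ} {C : DType σ} {A : PType σ}
    {e : Expr σ} (h : HasTypeC σ Ω (A :: Γ) c C) (he : HasTypeE σ Ω Γ e A) :
    HasTypeC σ Ω Γ (subst0C e c) C :=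
  h.subst (wellTypedSubst_sub1 he)

theorem HasTypeC.subst2 {Γ : List (PType σ)} {c : Comp σ} {C : DType σ} {A B : PType σ}
    {e₁ e₀ : Expr σ} (h : HasTypeC σ Ω (B :: A :: Γ) c C)
    (h₁ : HasTypeE σ Ω Γ e₁ A) (h₀ : HasTypeE σ Ω Γ e₀ B) :
    HasTypeC σ Ω Γ (subst2C e₁ e₀ c) C :=
  h.subst (wellTypedSubst_sub2 h₁ h₀)

/- `GenE Ω Γ e A` (resp. `GenC Ω Γ c C`) holds when the judgement is an instance of the
syntax-directed rule for the head constructor of `e` (resp. `c`), i.e. a derivation without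
subsumption at its root. -/
def GenE (Ω : OpSig σ) (Γ : List (PType σ)) : Expr σ → PType σ → Prop
  | .var n, A => Γ[n]? = some A
  | .tt, A => A = .bool
  | .ff, A => A = .bool
  | .zero, A => A = .nat
  | .succ e, A => A = .nat ∧ HasTypeE σ Ω Γ e .nat
  | .unit, A => A = .unit
  | .fn A c, T => ∃ C, T = .fn A C ∧ HasTypeC σ Ω (A :: Γ) c C
  | .inst ι, T => ∃ R, T = .eff (Ω.instOf ι) R ∧ ι ∈ R
  | .handler A cv ocs, T => ∃ B Δ Δ' Δ'',
      T = .hand (.bang A Δ) (.bang B Δ') ∧ HasTypeC σ Ω (A :: Γ) cv (.bang B Δ') ∧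
      HasTypeO σ Ω Γ ocs (.bang B Δ') Δ'' ∧ Δ ⊆ Δ'' ∪ Δ'

def GenC (Ω : OpSig σ) (Γ : List (PType σ)) : Comp σ → DType σ → Prop
  | .ret e, C => ∃ A Δ, C = .bang A Δ ∧ HasTypeE σ Ω Γ e A
  | .call e₁ op e₂ c, C => ∃ E R A Δ, C = .bang A Δ ∧
      HasTypeE σ Ω Γ e₁ (.eff E R) ∧ Ω.opOf op = E ∧ HasTypeE σ Ω Γ e₂ (Ω.par op) ∧
      HasTypeC σ Ω (Ω.res op :: Γ) c (.bang A Δ) ∧ ∀ ι ∈ R, (ι, op) ∈ Δ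
  | .handle e c, D => ∃ C, HasTypeE σ Ω Γ e (.hand C D) ∧ HasTypeC σ Ω Γ c C
  | .ite e c₁ c₂, C =>
      HasTypeE σ Ω Γ e .bool ∧ HasTypeC σ Ω Γ c₁ C ∧ HasTypeC σ Ω Γ c₂ C
  | .case e c₁ c₂, C =>
      HasTypeE σ Ω Γ e .nat ∧ HasTypeC σ Ω Γ c₁ C ∧ HasTypeC σ Ω (.nat :: Γ) c₂ C
  | .absurd C₀ e, C => C = C₀ ∧ HasTypeE σ Ω Γ e .empty
  | .app e₁ e₂, C => ∃ A, HasTypeE σ Ω Γ e₁ (.fn A C) ∧ HasTypeE σ Ω Γ e₂ A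
  | .letin c₁ c₂, C => ∃ A B Δ, C = .bang B Δ ∧ HasTypeC σ Ω Γ c₁ (.bang A Δ) ∧
      HasTypeC σ Ω (A :: Γ) c₂ (.bang B Δ)
  | .letrec A C₀ c₁ c₂, D =>
      HasTypeC σ Ω (A :: .fn A C₀ :: Γ) c₁ C₀ ∧ HasTypeC σ Ω (.fn A C₀ :: Γ) c₂ D

theorem HasTypeE.generation {Γ : List (PType σ)} {e : Expr σ} {A : PType σ} :
    HasTypeE σ Ω Γ e A → ∃ A₀, SubP σ A₀ A ∧ GenE Ω Γ e A₀
  | .var h => ⟨_, .refl _, h⟩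
  | .tt => ⟨_, .refl _, rfl⟩
  | .ff => ⟨_, .refl _, rfl⟩
  | .zero => ⟨_, .refl _, rfl⟩
  | .succ h => ⟨_, .refl _, rfl, h⟩
  | .unit => ⟨_, .refl _, rfl⟩
  | .fn h => ⟨_, .refl _, _, rfl, h⟩
  | .inst h₁ h₂ => ⟨_, .refl _, _, by rw [h₂ _ h₁], h₁⟩
  | .handler hv ho hΔ => ⟨_, .refl _, _, _, _, _, rfl, hv, ho, hΔ⟩
  | .sub h hA =>
      let ⟨A₀, h₀, hg⟩ := h.generation
      ⟨A₀, h₀.trans hA, hg⟩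

theorem HasTypeC.generation {Γ : List (PType σ)} {c : Comp σ} {C : DType σ} :
    HasTypeC σ Ω Γ c C → ∃ C₀, SubD σ C₀ C ∧ GenC Ω Γ c C₀
  | .ret h => ⟨_, .refl _, _, _, rfl, h⟩
  | .call h₁ hop h₂ hc hR => ⟨_, .refl _, _, _, _, _, rfl, h₁, hop, h₂, hc, hR⟩
  | .handle he hc => ⟨_, .refl _, _, he, hc⟩
  | .ite he h₁ h₂ => ⟨_, .refl _, he, h₁, h₂⟩
  | .case he h₁ h₂ => ⟨_, .refl _, he, h₁, h₂⟩
  | .absurd he => ⟨_, .refl _, rfl, he⟩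
  | .app h₁ h₂ => ⟨_, .refl _, _, h₁, h₂⟩
  | .letin h₁ h₂ => ⟨_, .refl _, _, _, _, rfl, h₁, h₂⟩
  | .letrec h₁ h₂ => ⟨_, .refl _, h₁, h₂⟩
  | .sub h hC =>
      let ⟨C₀, h₀, hg⟩ := h.generation
      ⟨C₀, h₀.trans hC, hg⟩

theorem HasTypeE.succ_inv {Γ : List (PType σ)} {e : Expr σ} {A : PType σ}
    (h : HasTypeE σ Ω Γ (.succ e) A) : HasTypeE σ Ω Γ e .nat :=
  let ⟨_, _, _, he⟩ := h.generation
  he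

theorem HasTypeE.fn_inv {Γ : List (PType σ)} {A A' : PType σ} {c : Comp σ} {C : DType σ}
    (h : HasTypeE σ Ω Γ (.fn A c) (.fn A' C)) : SubP σ A' A ∧ HasTypeC σ Ω (A :: Γ) c C := by
  obtain ⟨_, hsub, C₀, rfl, hc⟩ := h.generation
  cases hsub with
  | fn hA hC => exact ⟨hA, hc.sub hC⟩

theorem HasTypeE.handler_inv {Γ : List (PType σ)} {A : PType σ} {cv : Comp σ}
    {ocs : OpCases σ} {C D : DType σ} (h : HasTypeE σ Ω Γ (.handler A cv ocs) (.hand C D)) :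
    ∃ B Δ Δ' Δ'', SubD σ C (.bang A Δ) ∧ SubD σ (.bang B Δ') D ∧
      HasTypeC σ Ω (A :: Γ) cv (.bang B Δ') ∧ HasTypeO σ Ω Γ ocs (.bang B Δ') Δ'' ∧
      Δ ⊆ Δ'' ∪ Δ' := by
  obtain ⟨_, hsub, B, Δ, Δ', Δ'', rfl, hv, ho, hΔ⟩ := h.generation
  cases hsub with
  | hand hC hD => exact ⟨B, Δ, Δ', Δ'', hC, hD, hv, ho, hΔ⟩

theorem HasTypeE.eq_inst_of_eff {e : Expr σ} {E : σ.Effect} {R : Finset σ.Inst}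
    (h : HasTypeE σ Ω [] e (.eff E R)) : ∃ ι, e = .inst ι ∧ ι ∈ R ∧ Ω.instOf ι = E := by
  obtain ⟨A₀, hA, hg⟩ := h.generation
  cases hA with
  | eff hR =>
    cases e with
    | inst ι =>
      obtain ⟨_, ⟨⟩, hι⟩ := hg
      exact ⟨ι, rfl, hR hι, rfl⟩
    | _ => simp [GenE] at hg

theorem HasTypeC.ret_inv {Γ : List (PType σ)} {e : Expr σ} {A : PType σ}
    {Δ : Finset (σ.Inst × σ.Op)} (h : HasTypeC σ Ω Γ (.ret e) (.bang A Δ)) :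
    HasTypeE σ Ω Γ e A := by
  obtain ⟨_, hsub, A₀, Δ₀, rfl, he⟩ := h.generation
  cases hsub with
  | bang hA _ => exact he.sub hA

theorem HasTypeC.call_inv {Γ : List (PType σ)} {e₁ e₂ : Expr σ} {op : σ.Op} {c : Comp σ}
    {A : PType σ} {Δ : Finset (σ.Inst × σ.Op)}
    (h : HasTypeC σ Ω Γ (.call e₁ op e₂ c) (.bang A Δ)) : ∃ E R,
      HasTypeE σ Ω Γ e₁ (.eff E R) ∧ Ω.opOf op = E ∧ HasTypeE σ Ω Γ e₂ (Ω.par op) ∧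
      HasTypeC σ Ω (Ω.res op :: Γ) c (.bang A Δ) ∧ ∀ ι ∈ R, (ι, op) ∈ Δ := by
  obtain ⟨_, hsub, E, R, A₀, Δ₀, rfl, h₁, hop, h₂, hc, hR⟩ := h.generation
  cases hsub with
  | bang hA hΔ => exact ⟨E, R, h₁, hop, h₂, hc.sub (.bang hA hΔ), fun ι hι => hΔ (hR ι hι)⟩

theorem HasTypeC.handle_inv {Γ : List (PType σ)} {e : Expr σ} {c : Comp σ} {D : DType σ}
    (h : HasTypeC σ Ω Γ (.handle e c) D) :
    ∃ C, HasTypeE σ Ω Γ e (.hand C D) ∧ HasTypeC σ Ω Γ c C :=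
  let ⟨_, hD, C, he, hc⟩ := h.generation
  ⟨C, he.sub (.hand (.refl C) hD), hc⟩

theorem HasTypeC.ite_inv {Γ : List (PType σ)} {e : Expr σ} {c₁ c₂ : Comp σ} {C : DType σ}
    (h : HasTypeC σ Ω Γ (.ite e c₁ c₂) C) :
    HasTypeE σ Ω Γ e .bool ∧ HasTypeC σ Ω Γ c₁ C ∧ HasTypeC σ Ω Γ c₂ C :=
  let ⟨_, hC, he, h₁, h₂⟩ := h.generation
  ⟨he, h₁.sub hC, h₂.sub hC⟩

theorem HasTypeC.case_inv {Γ : List (PType σ)} {e : Expr σ} {c₁ c₂ : Comp σ} {C : DType σ}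
    (h : HasTypeC σ Ω Γ (.case e c₁ c₂) C) :
    HasTypeE σ Ω Γ e .nat ∧ HasTypeC σ Ω Γ c₁ C ∧ HasTypeC σ Ω (.nat :: Γ) c₂ C :=
  let ⟨_, hC, he, h₁, h₂⟩ := h.generation
  ⟨he, h₁.sub hC, h₂.sub hC⟩

theorem HasTypeC.app_inv {Γ : List (PType σ)} {e₁ e₂ : Expr σ} {C : DType σ}
    (h : HasTypeC σ Ω Γ (.app e₁ e₂) C) :
    ∃ A, HasTypeE σ Ω Γ e₁ (.fn A C) ∧ HasTypeE σ Ω Γ e₂ A :=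
  let ⟨_, hC, A, h₁, h₂⟩ := h.generation
  ⟨A, h₁.sub (.fn (.refl A) hC), h₂⟩

theorem HasTypeC.letin_inv {Γ : List (PType σ)} {c₁ c₂ : Comp σ} {B : PType σ}
    {Δ : Finset (σ.Inst × σ.Op)} (h : HasTypeC σ Ω Γ (.letin c₁ c₂) (.bang B Δ)) :
    ∃ A, HasTypeC σ Ω Γ c₁ (.bang A Δ) ∧ HasTypeC σ Ω (A :: Γ) c₂ (.bang B Δ) := by
  obtain ⟨_, hsub, A, B₀, Δ₀, rfl, h₁, h₂⟩ := h.generation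
  cases hsub with
  | bang hB hΔ => exact ⟨A, h₁.sub (.bang (.refl A) hΔ), h₂.sub (.bang hB hΔ)⟩

theorem HasTypeC.letrec_inv {Γ : List (PType σ)} {A : PType σ} {C D : DType σ}
    {c₁ c₂ : Comp σ} (h : HasTypeC σ Ω Γ (.letrec A C c₁ c₂) D) :
    HasTypeC σ Ω (A :: .fn A C :: Γ) c₁ C ∧ HasTypeC σ Ω (.fn A C :: Γ) c₂ D :=
  let ⟨_, hD, h₁, h₂⟩ := h.generation
  ⟨h₁, h₂.sub hD⟩

theorem HasTypeC.letin_ret {Γ : List (PType σ)} {e : Expr σ} {c : Comp σ} {C : DType σ}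
    (h : HasTypeC σ Ω Γ (.letin (.ret e) c) C) : HasTypeC σ Ω Γ (subst0C e c) C := by
  obtain ⟨B, Δ⟩ := C
  obtain ⟨A, h₁, h₂⟩ := h.letin_inv
  exact h₂.subst0 h₁.ret_inv

theorem HasTypeC.letin_call {Γ : List (PType σ)} {e₁ e₂ : Expr σ} {op : σ.Op}
    {c₁ c₂ : Comp σ} {C : DType σ} (h : HasTypeC σ Ω Γ (.letin (.call e₁ op e₂ c₁) c₂) C) :
    HasTypeC σ Ω Γ (.call e₁ op e₂ (.letin c₁ (renameC (liftRen Nat.succ) c₂))) C := by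
  obtain ⟨B, Δ⟩ := C
  obtain ⟨A, h₁, h₂⟩ := h.letin_inv
  obtain ⟨E, R, hι, hop, he, hc, hR⟩ := h₁.call_inv
  exact .call hι hop he (.letin hc (h₂.rename ((wellTypedRen_succ Γ _).lift A))) hR

theorem HasTypeE.recUnfold {Γ : List (PType σ)} {A : PType σ} {C : DType σ} {c : Comp σ}
    (h : HasTypeC σ Ω (A :: .fn A C :: Γ) c C) :
    HasTypeE σ Ω Γ (recUnfold A C c) (.fn A C) := by
  have hswap : WellTypedRen swap01 (A :: .fn A C :: Γ) (.fn A C :: A :: Γ)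
    | 0, _, hn => hn
    | 1, _, hn => hn
    | _ + 2, _, hn => hn
  exact .fn (.letrec (h.rename (((wellTypedRen_succ Γ A).lift _).lift _)) (h.rename hswap))

theorem HasTypeO.cons_inv {e : Expr σ} {op : σ.Op} {c : Comp σ} {ocs : OpCases σ}
    {C : DType σ} {Δ : Finset (σ.Inst × σ.Op)} (h : HasTypeO σ Ω [] (.cons e op c ocs) C Δ) :
    ∃ ι Δt, e = .inst ι ∧ HasTypeO σ Ω [] ocs C Δt ∧ Δ ⊆ insert (ι, op) Δt := by
  cases h with
  | @cons _ _ _ _ _ _ R _ _ Δt he _ _ ho hsingle hnonsingle =>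
    obtain ⟨ι, rfl, hι, -⟩ := he.eq_inst_of_eff
    refine ⟨ι, Δt, rfl, ho, ?_⟩
    by_cases hR : ∃ ι₀, R = {ι₀}
    · obtain ⟨ι₀, rfl⟩ := hR
      rw [Finset.mem_singleton.1 hι]
      exact hsingle ι₀ rfl
    · exact (hnonsingle hR).trans (Finset.subset_insert _ _)

theorem Dispatch.hasTypeC {ocs : OpCases σ} {ι : σ.Inst} {op : σ.Op} {e κ : Expr σ}
    {c : Comp σ} {B : PType σ} {Δ' Δ'' : Finset (σ.Inst × σ.Op)}
    (hd : Dispatch ocs ι op e κ c) (hocs : HasTypeO σ Ω [] ocs (.bang B Δ') Δ'')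
    (hmem : (ι, op) ∈ Δ'' ∪ Δ') (hι : Ω.instOf ι = Ω.opOf op)
    (hκ : HasTypeE σ Ω [] κ (.fn (Ω.res op) (.bang B Δ')))
    (he : HasTypeE σ Ω [] e (Ω.par op)) :
    HasTypeC σ Ω [] c (.bang B Δ') := by
  induction hd generalizing Δ'' with
  | @nil _ ι =>
    cases hocs
    refine .call (R := {ι}) (.inst (Finset.mem_singleton_self ι) (by simpa using hι)) rfl he
      (.app (hκ.rename (wellTypedRen_succ [] _)) (.var rfl)) ?_
    simpa using hmem
  | found =>
    cases hocs with
    | cons _ _ hc _ _ _ => exact hc.subst2 he hκ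
  | skip hne _ ih =>
    obtain ⟨ι₁, Δt, rfl, ho, hsub⟩ := hocs.cons_inv
    refine ih ho ?_ hι hκ he
    rcases Finset.mem_union.1 hmem with hmem | hmem
    · rcases Finset.mem_insert.1 (hsub hmem) with heq | hmem
      · obtain ⟨rfl, rfl⟩ := Prod.mk.inj heq
        simp at hne
      · exact Finset.mem_union_left _ hmem
    · exact Finset.mem_union_right _ hmem

theorem HasTypeC.handle_ret {Γ : List (PType σ)} {A : PType σ} {cv : Comp σ}
    {ocs : OpCases σ} {e : Expr σ} {D : DType σ}
    (h : HasTypeC σ Ω Γ (.handle (.handler A cv ocs) (.ret e)) D) :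
    HasTypeC σ Ω Γ (subst0C e cv) D := by
  obtain ⟨C, hh, hc⟩ := h.handle_inv
  obtain ⟨B, Δ, Δ', Δ'', hC, hD, hcv, -, -⟩ := hh.handler_inv
  exact (hcv.subst0 (hc.sub hC).ret_inv).sub hD

theorem HasTypeC.handle_call {A : PType σ} {cv : Comp σ} {ocs : OpCases σ} {ι : σ.Inst}
    {op : σ.Op} {e : Expr σ} {c c' : Comp σ} {D : DType σ}
    (h : HasTypeC σ Ω [] (.handle (.handler A cv ocs) (.call (.inst ι) op e c)) D)
    (hd : Dispatch ocs ι op e (.fn (Ω.res op) (.handle (shiftE (.handler A cv ocs)) c)) c') :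
    HasTypeC σ Ω [] c' D := by
  obtain ⟨C, hh, hcall⟩ := h.handle_inv
  obtain ⟨B, Δ, Δ', Δ'', hC, hD, hcv, hocs, hΔ⟩ := hh.handler_inv
  obtain ⟨E, R, hι, hop, he, hc, hR⟩ := (hcall.sub hC).call_inv
  obtain ⟨_, ⟨⟩, hιR, hιE⟩ := hι.eq_inst_of_eff
  have hκ : HasTypeE σ Ω [] (.fn (Ω.res op) (.handle (shiftE (.handler A cv ocs)) c))
      (.fn (Ω.res op) (.bang B Δ')) :=
    .fn (.handle ((HasTypeE.handler hcv hocs hΔ).rename (wellTypedRen_succ [] _)) hc)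
  exact (hd.hasTypeC hocs (hΔ (hR ι hιR)) (hιE.trans hop.symm) hκ he).sub hD

/-- **Preservation.** If `⊢ c : C` is derivable for a closed
computation `c` and `c ⇝ c'`, then `⊢ c' : C` is derivable. -/
theorem preservation {σ : Sig} (Ω : OpSig σ) [DecidableEq σ.Inst] [DecidableEq σ.Op]
    (c c' : Comp σ) (C : DType σ)
    (h : HasTypeC σ Ω [] c C) (hs : Step Ω c c') :
    HasTypeC σ Ω [] c' C := by
  induction hs generalizing C with
  | iteTrue => exact h.ite_inv.2.1
  | iteFalse => exact h.ite_inv.2.2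
  | caseZero => exact h.case_inv.2.1
  | caseSucc =>
    obtain ⟨he, -, hc⟩ := h.case_inv
    exact hc.subst0 he.succ_inv
  | app =>
    obtain ⟨A, hf, he⟩ := h.app_inv
    obtain ⟨hA, hc⟩ := hf.fn_inv
    exact hc.subst0 (he.sub hA)
  | letCong _ ih =>
    obtain ⟨B, Δ⟩ := C
    obtain ⟨A, h₁, h₂⟩ := h.letin_inv
    exact .letin (ih _ h₁) h₂
  | letVal => exact h.letin_ret
  | letOp => exact h.letin_call
  | letrec =>
    obtain ⟨h₁, h₂⟩ := h.letrec_inv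
    exact h₂.subst0 (.recUnfold h₁)
  | handleCong _ ih =>
    obtain ⟨C₀, hh, hc⟩ := h.handle_inv
    exact .handle hh (ih _ hc)
  | handleVal => exact h.handle_ret
  | handleOp hd => exact h.handle_call hd

end CoreEff
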